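/- arXiv:2104.10754 — 8 statements merged into one kernel-verified Lean document; each statement's English description precedes it below -/
import Mathlib

section
/- For every prime p ≥ 5, the binomial coefficient C(2p-1, p-1) is congruent to 1 modulo p^3. -/
/-!
Let `f = (X + 1)(X + 2) ⋯ (X + p - 1)`. Then `f(p) = (p - 1)! * C(2p - 1, p - 1)`, `f(0) = (p - 1)!`,
and `f(-p) = f(0)` because `p - 1` is even. In `f(p) + f(-p) - 2 f(0)` the odd-degree terms cancel
and those of degree at least `4` vanish modulo `p ^ 3`, leaving `2 c₂ p²` with `c₂` the coefficient
of `X²` in `f`. Since `X f = X (X + 1) ⋯ (X + p - 1) ≡ X ^ p - X` modulo `p`, the prime `p`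
divides `c₂` as soon as `p ≠ 3`. Hence `p ^ 3 ∣ (p - 1)! * (C(2p - 1, p - 1) - 1)`.
-/

open Polynomial Nat

namespace Polynomial

variable {R : Type*} [CommRing R]

theorem pow_three_dvd_eval_sub_coeff (q : R[X]) (a : R) :
    a ^ 3 ∣ q.eval a - (q.coeff 0 + q.coeff 1 * a + q.coeff 2 * a ^ 2) := by
  have hX : X ^ 3 ∣ q - (C (q.coeff 0) + C (q.coeff 1) * X + C (q.coeff 2) * X ^ 2) := by
    rw [X_pow_dvd_iff]
    intro d hd
    interval_cases d <;> simp [coeff_X, coeff_X_pow]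
  obtain ⟨r, hr⟩ := hX
  exact ⟨r.eval a, by simpa using congrArg (eval a) hr⟩

theorem pow_three_dvd_eval_add_eval_neg (q : R[X]) (a : R) :
    a ^ 3 ∣ q.eval a + q.eval (-a) - 2 * (q.eval 0 + q.coeff 2 * a ^ 2) := by
  have h_neg := pow_three_dvd_eval_sub_coeff q (-a)
  rw [Odd.neg_pow (by decide), neg_dvd] at h_neg
  convert dvd_add (pow_three_dvd_eval_sub_coeff q a) h_neg using 1
  rw [coeff_zero_eq_eval_zero]
  ring

end Polynomial

theorem ascPochhammer_eval_neg_natCast_self {R : Type*} [CommRing R] (n : ℕ) :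
    (ascPochhammer R n).eval (-(n : R)) = (-1) ^ n * n ! := by
  rw [ascPochhammer_eval_neg_eq_descPochhammer, descPochhammer_eval_eq_descFactorial,
    descFactorial_self]

theorem ascPochhammer_eval_natCast_add_two (n : ℕ) :
    (ascPochhammer ℤ n).eval ((n : ℤ) + 2) = n ! * (2 * n + 1).choose n := by
  have h := ascPochhammer_nat_eq_natCast_ascFactorial ℤ (n + 2) n
  rw [ascFactorial_eq_factorial_mul_choose, show n + 1 + n = 2 * n + 1 by omega] at h
  exact_mod_cast h

theorem ZMod.ascPochhammer_eq_X_pow_sub_X (p : ℕ) [Fact p.Prime] :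
    ascPochhammer (ZMod p) p = X ^ p - X := by
  have hp : 1 < p := (Fact.out : p.Prime).one_lt
  have hmonic : (X ^ p - X : (ZMod p)[X]).Monic := monic_X_pow_sub (by simpa using hp)
  have hdeg : (ascPochhammer (ZMod p) p).degree = p := by
    rw [degree_eq_natDegree (monic_ascPochhammer _ p).ne_zero, ascPochhammer_natDegree]
  refine eq_of_degree_le_of_eval_finset_eq Finset.univ (by simp [hdeg]) ?_ ?_ ?_
  · rw [hdeg, degree_eq_natDegree hmonic.ne_zero, FiniteField.X_pow_card_sub_X_natDegree_eq _ hp]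
  · rw [(monic_ascPochhammer _ p).leadingCoeff, hmonic.leadingCoeff]
  · intro x _
    have hx : x = -(((-x).val : ℕ) : ZMod p) := by simp
    rw [eval_sub, eval_pow, eval_X, ZMod.pow_card, sub_self, hx,
      ascPochhammer_eval_neg_coe_nat_of_lt (ZMod.val_lt _)]

theorem prime_dvd_coeff_ascPochhammer {p k : ℕ} [Fact p.Prime] (hk₁ : k ≠ 1) (hkp : k ≠ p) :
    (p : ℤ) ∣ (ascPochhammer ℤ p).coeff k := by
  rw [← ZMod.intCast_zmod_eq_zero_iff_dvd, ← eq_intCast (Int.castRingHom (ZMod p)), ← coeff_map,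
    ascPochhammer_map, ZMod.ascPochhammer_eq_X_pow_sub_X]
  simp [coeff_X, coeff_X_pow, hkp, Ne.symm hk₁]

theorem stmt_0 (p : ℕ) (hp : p.Prime) (h5 : 5 ≤ p) :
    Nat.choose (2 * p - 1) (p - 1) ≡ 1 [MOD p ^ 3] := by
  have := Fact.mk hp
  obtain ⟨n, rfl⟩ : ∃ n, p = n + 1 := ⟨p - 1, by omega⟩
  rw [Nat.add_sub_cancel, show 2 * (n + 1) - 1 = 2 * n + 1 by omega]
  have hn : Even n := by simpa [Nat.odd_add_one] using hp.odd_of_ne_two (by omega)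
  set f := (ascPochhammer ℤ n).comp (X + 1)
  have h_pos : f.eval ((n + 1 : ℕ) : ℤ) = n ! * (2 * n + 1).choose n := by
    simpa [f, add_assoc, one_add_one_eq_two] using ascPochhammer_eval_natCast_add_two n
  have h_zero : f.eval 0 = n ! := by simp [f]
  have h_neg : f.eval (-((n + 1 : ℕ) : ℤ)) = n ! := by
    simp [f, ascPochhammer_eval_neg_natCast_self, hn.neg_one_pow]
  obtain ⟨d, h_coeff⟩ : ((n + 1 : ℕ) : ℤ) ∣ f.coeff 2 := by
    rw [← coeff_X_mul, ← ascPochhammer_succ_left]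
    exact prime_dvd_coeff_ascPochhammer (by decide) (by omega)
  have h_dvd : ((n + 1 : ℕ) : ℤ) ^ 3 ∣ n ! * ((2 * n + 1).choose n - 1) := by
    have key := pow_three_dvd_eval_add_eval_neg f ((n + 1 : ℕ) : ℤ)
    rw [h_pos, h_zero, h_neg, h_coeff] at key
    refine (dvd_add key (dvd_mul_right _ (2 * d))).trans (dvd_of_eq ?_)
    ring
  have h_coprime : IsCoprime (((n + 1 : ℕ) : ℤ) ^ 3) (n ! : ℤ) := by
    rw [← Nat.cast_pow, Nat.isCoprime_iff_coprime]
    exact (hp.coprime_factorial_of_lt n.lt_succ_self).pow_left 3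
  exact (Nat.modEq_iff_dvd.mpr (by exact_mod_cast h_coprime.dvd_of_dvd_mul_left h_dvd)).symm
end

section
/- For every prime p ≥ 5, the harmonic number H_{p-1} = ∑_{k=1}^{p-1} 1/k, viewed as a rational number, has p-adic valuation at least 2; i.e., ∑_{k=1}^{p-1} 1/k ≡ 0 mod p^2 in ℤ_p. -/
/-!
Pairing `k` with `p - k` gives `2 H = p ∑ 1 / (k (p - k))`. Modulo `p` each `1 / (k (p - k))`
is `-1 / k²`, and `∑ 1 / k² ≡ ∑ x² ≡ 0 (mod p)` as soon as `p > 3`. Hence the second sum is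
divisible by `p`, and since `2` is a `p`-adic unit, `H` is divisible by `p²`.
-/

open Finset

theorem FiniteField.sum_inv_pow_lt_card_sub_one {K : Type*} [Field K] [Fintype K] (i : ℕ)
    (h : i < Fintype.card K - 1) : ∑ x : K, x⁻¹ ^ i = 0 := by
  rw [← FiniteField.sum_pow_lt_card_sub_one K i h]
  exact Fintype.sum_equiv (Equiv.inv K) _ _ fun _ => rfl

theorem ZMod.sum_Icc_natCast_eq_sum {M : Type*} [AddCommMonoid M] (n : ℕ) [NeZero n]
    (f : ZMod n → M) (hf : f 0 = 0) : ∑ k ∈ Icc 1 (n - 1), f k = ∑ x, f x := by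
  rw [← sum_erase univ hf]
  refine sum_nbij' (fun k => (k : ZMod n)) ZMod.val ?_ ?_ ?_ ?_ fun _ _ => rfl
  · intro k hk
    have hk := mem_Icc.mp hk
    simpa [ZMod.natCast_eq_zero_iff] using Nat.not_dvd_of_pos_of_lt hk.1 (by omega)
  · intro x hx
    have hx0 : x.val ≠ 0 := by simpa [ZMod.val_eq_zero] using ne_of_mem_erase hx
    have := x.val_lt
    rw [mem_Icc]
    omega
  · intro k hk
    exact ZMod.val_cast_of_lt (by have := mem_Icc.mp hk; omega)
  · intro x _
    exact ZMod.natCast_zmod_val x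

theorem ZMod.sum_Icc_inv_mul_sub_eq_zero (p : ℕ) [Fact p.Prime] (hp : 3 < p) :
    ∑ k ∈ Icc 1 (p - 1), ((k * (p - k) : ℕ) : ZMod p)⁻¹ = 0 := by
  have hterm : ∀ k ∈ Icc 1 (p - 1), ((k * (p - k) : ℕ) : ZMod p)⁻¹ = -(k : ZMod p)⁻¹ ^ 2 := by
    intro k hk
    have hkp : k ≤ p := by have := mem_Icc.mp hk; omega
    rw [Nat.cast_mul, Nat.cast_sub hkp, ZMod.natCast_self]
    simp [sq]
  rw [sum_congr rfl hterm, ZMod.sum_Icc_natCast_eq_sum p (fun x => -x⁻¹ ^ 2) (by simp),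
    sum_neg_distrib, FiniteField.sum_inv_pow_lt_card_sub_one, neg_zero]
  rw [ZMod.card]
  omega

theorem two_mul_sum_Icc_inv {K : Type*} [Field K] [CharZero K] (n : ℕ) :
    2 * ∑ k ∈ Icc 1 (n - 1), (k : K)⁻¹ = n * ∑ k ∈ Icc 1 (n - 1), ((k * (n - k) : ℕ) : K)⁻¹ := by
  have hreflect : ∑ k ∈ Icc 1 (n - 1), ((n - k : ℕ) : K)⁻¹ = ∑ k ∈ Icc 1 (n - 1), (k : K)⁻¹ := by
    refine sum_nbij' (n - ·) (n - ·) ?_ ?_ ?_ ?_ fun _ _ => rfl <;>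
      · intro k hk; simp only [mem_Icc] at *; omega
  rw [two_mul]
  nth_rw 1 [← hreflect]
  rw [← sum_add_distrib, mul_sum]
  refine sum_congr rfl fun k hk => ?_
  have hk := mem_Icc.mp hk
  have h1 : (k : K) ≠ 0 := by exact_mod_cast (by omega : k ≠ 0)
  have h2 : ((n - k : ℕ) : K) ≠ 0 := by exact_mod_cast (by omega : n - k ≠ 0)
  have hn : (n : K) = k + (n - k : ℕ) := by rw [← Nat.cast_add]; congr 1; omega
  rw [Nat.cast_mul, hn]
  field_simp

theorem PadicInt.map_inv_natCast {p : ℕ} [Fact p.Prime] {K : Type*} [DivisionRing K]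
    (φ : ℤ_[p] →+* K) {m : ℕ} (hm : ¬p ∣ m) : φ (m : ℤ_[p]).inv = (m : K)⁻¹ := by
  have hunit : ‖(m : ℤ_[p])‖ = 1 := by
    rw [norm_natCast_eq_one_iff, Nat.Prime.coprime_iff_not_dvd Fact.out]
    exact hm
  refine eq_inv_of_mul_eq_one_right ?_
  rw [← map_natCast φ, ← map_mul, mul_inv hunit, map_one]

theorem Padic.norm_sum_inv_natCast_le {p : ℕ} [Fact p.Prime] {ι : Type*} (s : Finset ι)
    (m : ι → ℕ) (hm : ∀ i ∈ s, ¬p ∣ m i) (h : ∑ i ∈ s, (m i : ZMod p)⁻¹ = 0) :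
    ‖∑ i ∈ s, (m i : ℚ_[p])⁻¹‖ ≤ (p : ℝ)⁻¹ := by
  set y : ℤ_[p] := ∑ i ∈ s, (m i : ℤ_[p]).inv
  have hy : (y : ℚ_[p]) = ∑ i ∈ s, (m i : ℚ_[p])⁻¹ := by
    rw [PadicInt.coe_sum]
    exact sum_congr rfl fun i hi => PadicInt.map_inv_natCast PadicInt.Coe.ringHom (hm i hi)
  have hy0 : PadicInt.toZMod y = 0 := by
    rw [map_sum, ← h]
    exact sum_congr rfl fun i hi => PadicInt.map_inv_natCast _ (hm i hi)
  rw [← hy, PadicInt.padic_norm_e_of_padicInt, ← zpow_neg_one,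
    PadicInt.norm_le_pow_iff_norm_lt_pow_add_one, neg_add_cancel, zpow_zero,
    ← PadicInt.mem_nonunits, ← IsLocalRing.mem_maximalIdeal, ← PadicInt.ker_toZMod]
  exact hy0

theorem stmt_1 (p : ℕ) [Fact p.Prime] (h5 : 5 ≤ p) :
    ‖((∑ k ∈ Finset.Icc 1 (p - 1), (1 : ℚ) / k : ℚ) : ℚ_[p])‖ ≤ (p : ℝ) ^ (-2 : ℤ) := by
  have hp : p.Prime := Fact.out
  have hcoprime : ∀ k ∈ Icc 1 (p - 1), ¬p ∣ k * (p - k) := by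
    intro k hk
    have hk := mem_Icc.mp hk
    rw [hp.prime.dvd_mul, not_or]
    exact ⟨Nat.not_dvd_of_pos_of_lt hk.1 (by omega), Nat.not_dvd_of_pos_of_lt (by omega) (by omega)⟩
  have hU := Padic.norm_sum_inv_natCast_le _ _ hcoprime
    (ZMod.sum_Icc_inv_mul_sub_eq_zero p (by omega))
  have h2 : ‖(2 : ℚ_[p])‖ = 1 := by
    rw [← Nat.cast_ofNat, Padic.norm_natCast_eq_one_iff, Nat.coprime_primes hp Nat.prime_two]
    omega
  simp only [Rat.cast_sum, one_div, Rat.cast_inv, Rat.cast_natCast]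
  rw [← one_mul ‖_‖, ← h2, ← norm_mul, two_mul_sum_Icc_inv, norm_mul, Padic.norm_p]
  calc (p : ℝ)⁻¹ * _ ≤ (p : ℝ)⁻¹ * (p : ℝ)⁻¹ := by gcongr
    _ = (p : ℝ) ^ (-2 : ℤ) := by rw [← mul_inv, ← sq, zpow_neg, zpow_ofNat]
end

section
/- Let p be a prime and let ε_p = 2 if p = 2, ε_p = 1 if p = 3, and ε_p = 0 if p ≥ 5. Then for all n ∈ ℕ, the sum ∑_{1 ≤ k ≤ n, p ∤ k} 1/k is divisible by p^{max(0, 2·ord_p(n) − ε_p)} in ℤ_p. -/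
/-!
For `p ∣ n`, pairing `k` with `n - k` gives `2 S = n (n R - Q)` with `Q = ∑ 1 / k ^ 2` and
`R = ∑ 1 / (k ^ 2 (n - k))`, where `R` is `p`-integral. So it suffices that `p ^ v ∣ 6 Q` when
`p ^ v ∣ n`. Modulo `p ^ v` the terms `1 / k ^ 2` run `n / p ^ v` times through the squared inverses
of the units, and since inversion permutes the units this is a multiple of `∑ r ^ 2` over the units
`r < p ^ v`; the closed form of `∑ r ^ 2` shows that `p ^ v` divides six times that sum. Hence
`p ^ (2 v) ∣ 12 S`, and `12 = 2 ^ 2 * 3` is exactly where `ε_p` comes from.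
-/

open Finset Function

def primeToIcc (p n : ℕ) : Finset ℕ := (Icc 1 n).filter (fun k => ¬ p ∣ k)

@[simp]
lemma mem_primeToIcc {p n k : ℕ} :
    k ∈ primeToIcc p n ↔ (1 ≤ k ∧ k ≤ n) ∧ ¬ p ∣ k := by
  simp [primeToIcc]

section Combinatorics

variable {M : Type*} [AddCommMonoid M]

lemma sum_Icc_one_eq_sum_range (g : ℕ → M) (n : ℕ) :
    ∑ k ∈ Icc 1 n, g k = ∑ k ∈ range n, g (k + 1) := by
  rw [← Finset.Ico_add_one_right_eq_Icc, sum_Ico_eq_sum_range]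
  simp [add_comm]

lemma sum_Icc_mul_of_periodic {g : ℕ → M} {N : ℕ} (hg : Periodic g N) (m : ℕ) :
    ∑ k ∈ Icc 1 (N * m), g k = m • ∑ k ∈ Icc 1 N, g k := by
  simp only [sum_Icc_one_eq_sum_range]
  induction m with
  | zero => simp
  | succ m ih =>
    rw [mul_add_one, sum_range_add, ih, succ_nsmul]
    refine congrArg _ (sum_congr rfl fun k _ => ?_)
    rw [show N * m + k + 1 = k + 1 + m * N by ring]
    exact hg.nat_mul m (k + 1)

lemma sum_primeToIcc_mul_of_periodic {p N : ℕ} {g : ℕ → M} (hN : p ∣ N) (hg : Periodic g N)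
    (m : ℕ) : ∑ k ∈ primeToIcc p (N * m), g k = m • ∑ k ∈ primeToIcc p N, g k := by
  simp only [primeToIcc, sum_filter]
  refine sum_Icc_mul_of_periodic (fun k => ?_) m
  simp only [hg k, Nat.dvd_add_left hN]

lemma sum_primeToIcc_reflect {p n : ℕ} (hn : p ∣ n) (f : ℕ → M) :
    ∑ k ∈ primeToIcc p n, f (n - k) = ∑ k ∈ primeToIcc p n, f k := by
  have hmem : ∀ k ∈ primeToIcc p n, n - k ∈ primeToIcc p n ∧ n - (n - k) = k := by
    intro k hk
    rw [mem_primeToIcc] at hk ⊢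
    obtain ⟨⟨hk1, hkn⟩, hpk⟩ := hk
    have hlt : k < n := lt_of_le_of_ne hkn (by rintro rfl; exact hpk hn)
    refine ⟨⟨by omega, fun hpnk => hpk ?_⟩, by omega⟩
    simpa [Nat.sub_sub_self hkn] using Nat.dvd_sub hn hpnk
  exact sum_nbij' (n - ·) (n - ·) (fun k hk => (hmem k hk).1) (fun k hk => (hmem k hk).1)
    (fun k hk => (hmem k hk).2) (fun k hk => (hmem k hk).2) (fun _ _ => rfl)

end Combinatorics

lemma two_mul_sum_primeToIcc_one_div {K : Type*} [Field K] [CharZero K] {p n : ℕ} (hn : p ∣ n) :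
    2 * ∑ k ∈ primeToIcc p n, (1 : K) / k
      = n * (n * ∑ k ∈ primeToIcc p n, 1 / ((k : K) ^ 2 * (n - k : ℕ))
        - ∑ k ∈ primeToIcc p n, 1 / (k : K) ^ 2) := by
  rw [two_mul]
  nth_rewrite 2 [← sum_primeToIcc_reflect hn]
  rw [mul_sum, ← sum_sub_distrib, mul_sum, ← sum_add_distrib]
  refine sum_congr rfl fun k hk => ?_
  rw [mem_primeToIcc] at hk
  have hlt : k < n := lt_of_le_of_ne hk.1.2 (by rintro rfl; exact hk.2 hn)
  have hk0 : (k : K) ≠ 0 := by exact_mod_cast (by omega : k ≠ 0)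
  have hnk : ((n - k : ℕ) : K) ≠ 0 := by exact_mod_cast (by omega : n - k ≠ 0)
  rw [Nat.cast_sub hlt.le] at hnk ⊢
  field_simp
  ring

lemma six_mul_sum_Icc_sq (N : ℕ) :
    6 * ∑ r ∈ Icc 1 N, (r : ℤ) ^ 2 = N * (N + 1) * (2 * N + 1) := by
  induction N with
  | zero => simp
  | succ N ih =>
    rw [sum_Icc_succ_top (by omega), mul_add, ih]
    push_cast
    ring

lemma sum_Icc_mul_filter_dvd_sq {p : ℕ} (hp : p ≠ 0) (M : ℕ) :
    ∑ r ∈ (Icc 1 (p * M)).filter (p ∣ ·), (r : ℤ) ^ 2 = p ^ 2 * ∑ j ∈ Icc 1 M, (j : ℤ) ^ 2 := by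
  have hmul :
      (Icc 1 (p * M)).filter (p ∣ ·) = (Icc 1 M).map ⟨(p * ·), mul_right_injective₀ hp⟩ := by
    ext r
    simp only [mem_filter, mem_Icc, mem_map, Embedding.coeFn_mk]
    constructor
    · rintro ⟨⟨hr1, hrM⟩, j, rfl⟩
      exact ⟨j, ⟨Nat.pos_of_mul_pos_left hr1, Nat.le_of_mul_le_mul_left hrM (by omega)⟩,
        rfl⟩
    · rintro ⟨j, ⟨hj1, hjM⟩, rfl⟩
      exact ⟨⟨Nat.mul_pos (by omega) hj1, Nat.mul_le_mul_left p hjM⟩,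
        dvd_mul_right p j⟩
  rw [hmul, sum_map, mul_sum]
  refine sum_congr rfl fun j _ => ?_
  simp only [Embedding.coeFn_mk]
  push_cast
  ring

lemma pow_dvd_six_mul_sum_primeToIcc_sq {p : ℕ} (hp : p ≠ 0) (v : ℕ) :
    (p : ℤ) ^ v ∣ 6 * ∑ r ∈ primeToIcc p (p ^ v), (r : ℤ) ^ 2 := by
  cases v with
  | zero => simp
  | succ v =>
    obtain ⟨M, hM⟩ : ∃ M, M = p ^ v := ⟨_, rfl⟩
    rw [show p ^ (v + 1) = p * M by rw [hM, pow_succ'],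
      show (p : ℤ) ^ (v + 1) = p * M by rw [hM, pow_succ']; push_cast; ring]
    have hsplit :=
      sum_filter_add_sum_filter_not (Icc 1 (p * M)) (p ∣ ·) (fun r => (r : ℤ) ^ 2)
    rw [sum_Icc_mul_filter_dvd_sq hp] at hsplit
    have hN := six_mul_sum_Icc_sq (p * M)
    have hM6 := six_mul_sum_Icc_sq M
    rw [primeToIcc]
    push_cast at hN
    refine ⟨(p * M + 1) * (2 * p * M + 1) - p * (M + 1) * (2 * M + 1), ?_⟩
    linear_combination 6 * hsplit + hN - p ^ 2 * hM6

section Padic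

variable {p : ℕ} [hp : Fact p.Prime]

lemma coprime_pow_of_not_dvd {k : ℕ} (v : ℕ) (hk : ¬ p ∣ k) : k.Coprime (p ^ v) :=
  (Nat.coprime_comm.mp ((Nat.Prime.coprime_iff_not_dvd hp.out).mpr hk)).pow_right v

lemma sum_primeToIcc_eq_sum_units {M : Type*} [AddCommMonoid M] {v : ℕ} (hv : v ≠ 0)
    (g : ZMod (p ^ v) → M) :
    ∑ r ∈ primeToIcc p (p ^ v), g r = ∑ u : (ZMod (p ^ v))ˣ, g u := by
  have : Fact (1 < p ^ v) := ⟨Nat.one_lt_pow hv hp.out.one_lt⟩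
  refine sum_bij'
    (fun r hr => ZMod.unitOfCoprime r (coprime_pow_of_not_dvd v (mem_primeToIcc.mp hr).2))
    (fun u _ => (u : ZMod (p ^ v)).val) (fun _ _ => mem_univ _) (fun u _ => ?_) (fun r hr => ?_)
    (fun u _ => Units.ext (by simp)) (fun _ _ => rfl)
  · have hcop := ZMod.val_coe_unit_coprime u
    rw [mem_primeToIcc]
    refine ⟨⟨Nat.one_le_iff_ne_zero.mpr ?_, (ZMod.val_lt _).le⟩, fun hpu => ?_⟩
    · rw [ZMod.val_ne_zero]; exact u.ne_zero
    · exact hp.out.one_lt.ne' (Nat.eq_one_of_dvd_coprimes hcop hpu (dvd_pow_self p hv))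
  · rw [mem_primeToIcc] at hr
    have hlt : r < p ^ v :=
      lt_of_le_of_ne hr.1.2 (by rintro rfl; exact hr.2 (dvd_pow_self p hv))
    simp [ZMod.val_cast_of_lt hlt]

lemma six_mul_sum_primeToIcc_inv_sq_eq_zero {v : ℕ} (hv : v ≠ 0) (m : ℕ) :
    6 * ∑ k ∈ primeToIcc p (p ^ v * m), ((k : ZMod (p ^ v))⁻¹) ^ 2 = 0 := by
  have hper : Periodic (fun k : ℕ => ((k : ZMod (p ^ v))⁻¹) ^ 2) (p ^ v) := fun k => by simp
  have hinv : ∑ u : (ZMod (p ^ v))ˣ, ((u : ZMod (p ^ v))⁻¹) ^ 2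
      = ∑ u : (ZMod (p ^ v))ˣ, (u : ZMod (p ^ v)) ^ 2 := by
    simp only [ZMod.inv_coe_unit]
    exact Fintype.sum_equiv (Equiv.inv _) _ _ fun _ => rfl
  have hsq := (ZMod.intCast_zmod_eq_zero_iff_dvd (6 * ∑ r ∈ primeToIcc p (p ^ v), (r : ℤ) ^ 2)
    (p ^ v)).mpr (by exact_mod_cast pow_dvd_six_mul_sum_primeToIcc_sq hp.out.ne_zero v)
  push_cast at hsq
  rw [sum_primeToIcc_mul_of_periodic (dvd_pow_self p hv) hper, mul_smul_comm,
    sum_primeToIcc_eq_sum_units hv (fun x => x⁻¹ ^ 2), hinv,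
    ← sum_primeToIcc_eq_sum_units hv (fun x => x ^ 2), hsq, smul_zero]

lemma norm_natCast_eq_one_of_not_dvd {k : ℕ} (hk : ¬ p ∣ k) : ‖(k : ℚ_[p])‖ = 1 :=
  Padic.norm_natCast_eq_one_iff.mpr ((Nat.Prime.coprime_iff_not_dvd hp.out).mpr hk)

lemma norm_one_div_sq_sub_val_inv_sq_le {k : ℕ} (v : ℕ) (hk : ¬ p ∣ k) :
    ‖1 / (k : ℚ_[p]) ^ 2 - (((k : ZMod (p ^ v))⁻¹).val : ℚ_[p]) ^ 2‖ ≤ (p : ℝ) ^ (-(v : ℤ)) := by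
  set w := ((k : ZMod (p ^ v))⁻¹).val
  have hunit : IsUnit (k : ZMod (p ^ v)) :=
    (ZMod.isUnit_iff_coprime _ _).mpr (coprime_pow_of_not_dvd v hk)
  have hdvd : (p : ℤ) ^ v ∣ 1 - ((k * w : ℕ) : ℤ) ^ 2 := by
    have := (ZMod.intCast_zmod_eq_zero_iff_dvd (1 - ((k * w : ℕ) : ℤ) ^ 2) (p ^ v)).mp
      (by push_cast; rw [ZMod.natCast_zmod_val, ZMod.mul_inv_of_unit _ hunit]; ring)
    exact_mod_cast this
  have hk0 : (k : ℚ_[p]) ≠ 0 := Nat.cast_ne_zero.mpr (by rintro rfl; exact hk (dvd_zero p))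
  have hdiff : 1 / (k : ℚ_[p]) ^ 2 - (w : ℚ_[p]) ^ 2
      = ((1 - ((k * w : ℕ) : ℤ) ^ 2 : ℤ) : ℚ_[p]) / (k : ℚ_[p]) ^ 2 := by
    push_cast
    field_simp
  rw [hdiff, norm_div, norm_pow, norm_natCast_eq_one_of_not_dvd hk, one_pow, div_one]
  exact (Padic.norm_int_le_pow_iff_dvd _ _).mpr hdvd

lemma norm_six_mul_sum_primeToIcc_one_div_sq_le {v : ℕ} (hv : v ≠ 0) (m : ℕ) :
    ‖6 * ∑ k ∈ primeToIcc p (p ^ v * m), 1 / (k : ℚ_[p]) ^ 2‖ ≤ (p : ℝ) ^ (-(v : ℤ)) := by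
  set A := primeToIcc p (p ^ v * m)
  set w : ℕ → ℕ := fun k => ((k : ZMod (p ^ v))⁻¹).val
  have hint : (p : ℤ) ^ v ∣ 6 * ∑ k ∈ A, (w k : ℤ) ^ 2 := by
    have := (ZMod.intCast_zmod_eq_zero_iff_dvd (6 * ∑ k ∈ A, (w k : ℤ) ^ 2) (p ^ v)).mp
      (by
        push_cast
        simp only [w, ZMod.natCast_zmod_val]
        exact six_mul_sum_primeToIcc_inv_sq_eq_zero hv m)
    exact_mod_cast this
  have hsplit : 6 * ∑ k ∈ A, 1 / (k : ℚ_[p]) ^ 2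
      = ∑ k ∈ A, 6 * (1 / (k : ℚ_[p]) ^ 2 - (w k : ℚ_[p]) ^ 2)
        + ((6 * ∑ k ∈ A, (w k : ℤ) ^ 2 : ℤ) : ℚ_[p]) := by
    push_cast
    rw [← mul_sum, ← mul_add, sum_sub_distrib, sub_add_cancel]
  rw [hsplit]
  refine (IsUltrametricDist.norm_add_le_max _ _).trans
    (max_le ?_ ((Padic.norm_int_le_pow_iff_dvd _ _).mpr hint))
  refine IsUltrametricDist.norm_sum_le_of_forall_le_of_nonneg (by positivity) fun k hk => ?_
  rw [norm_mul, ← one_mul ((p : ℝ) ^ _)]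
  exact mul_le_mul (by simpa using IsUltrametricDist.norm_natCast_le_one ℚ_[p] 6)
    (norm_one_div_sq_sub_val_inv_sq_le v (mem_primeToIcc.mp hk).2) (norm_nonneg _) zero_le_one

lemma norm_sum_primeToIcc_one_div_le_one (n : ℕ) :
    ‖∑ k ∈ primeToIcc p n, 1 / (k : ℚ_[p])‖ ≤ 1 :=
  IsUltrametricDist.norm_sum_le_of_forall_le_of_nonneg zero_le_one fun k hk => by
    rw [norm_div, norm_one, norm_natCast_eq_one_of_not_dvd (mem_primeToIcc.mp hk).2, div_one]

lemma norm_sum_primeToIcc_one_div_sq_mul_le_one {n : ℕ} (hn : p ∣ n) :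
    ‖∑ k ∈ primeToIcc p n, 1 / ((k : ℚ_[p]) ^ 2 * (n - k : ℕ))‖ ≤ 1 := by
  refine IsUltrametricDist.norm_sum_le_of_forall_le_of_nonneg zero_le_one fun k hk => ?_
  rw [mem_primeToIcc] at hk
  have hpnk : ¬ p ∣ n - k := fun h =>
    hk.2 (by simpa [Nat.sub_sub_self hk.1.2] using Nat.dvd_sub hn h)
  rw [norm_div, norm_one, norm_mul, norm_pow, norm_natCast_eq_one_of_not_dvd hk.2,
    norm_natCast_eq_one_of_not_dvd hpnk]
  norm_num

lemma norm_twelve_mul_sum_primeToIcc_one_div_le {n v : ℕ} (hv : v ≠ 0) (hpv : p ^ v ∣ n) :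
    ‖12 * ∑ k ∈ primeToIcc p n, 1 / (k : ℚ_[p])‖ ≤ (p : ℝ) ^ (-(2 * v : ℤ)) := by
  obtain ⟨m, rfl⟩ := hpv
  set n := p ^ v * m
  have hpn : p ∣ n := (dvd_pow_self p hv).mul_right m
  have hn : ‖(n : ℚ_[p])‖ ≤ (p : ℝ) ^ (-(v : ℤ)) :=
    (Padic.norm_int_le_pow_iff_dvd n v).mpr (by exact_mod_cast dvd_mul_right (p ^ v) m)
  set R := ∑ k ∈ primeToIcc p n, 1 / ((k : ℚ_[p]) ^ 2 * (n - k : ℕ))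
  set Q := ∑ k ∈ primeToIcc p n, 1 / (k : ℚ_[p]) ^ 2
  have hR : ‖6 * R‖ ≤ 1 := by
    rw [norm_mul, ← one_mul 1]
    exact mul_le_mul (by simpa using IsUltrametricDist.norm_natCast_le_one ℚ_[p] 6)
      (norm_sum_primeToIcc_one_div_sq_mul_le_one hpn) (norm_nonneg _) zero_le_one
  have h12 : 12 * ∑ k ∈ primeToIcc p n, 1 / (k : ℚ_[p]) = n * (n * (6 * R) - 6 * Q) := by
    rw [show (12 : ℚ_[p]) = 6 * 2 by norm_num, mul_assoc, two_mul_sum_primeToIcc_one_div hpn]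
    ring
  have hinner : ‖(n : ℚ_[p]) * (6 * R) - 6 * Q‖ ≤ (p : ℝ) ^ (-(v : ℤ)) := by
    rw [sub_eq_add_neg]
    refine (IsUltrametricDist.norm_add_le_max _ _).trans
      (max_le ?_ ((norm_neg _).trans_le (norm_six_mul_sum_primeToIcc_one_div_sq_le hv m)))
    rw [norm_mul, ← mul_one ((p : ℝ) ^ _)]
    exact mul_le_mul hn hR (norm_nonneg _) (by positivity)
  calc ‖12 * ∑ k ∈ primeToIcc p n, 1 / (k : ℚ_[p])‖
      ≤ (p : ℝ) ^ (-(v : ℤ)) * (p : ℝ) ^ (-(v : ℤ)) := by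
        rw [h12, norm_mul]; exact mul_le_mul hn hinner (norm_nonneg _) (by positivity)
    _ = (p : ℝ) ^ (-(2 * v : ℤ)) := by
        rw [← zpow_add₀ (by exact_mod_cast hp.out.ne_zero)]; ring_nf

lemma padicValNat_twelve : padicValNat p 12 = if p = 2 then 2 else if p = 3 then 1 else 0 := by
  split_ifs with h2 h3
  · subst h2
    rw [show 12 = 2 ^ 2 * 3 by norm_num, padicValNat.mul (by norm_num) (by norm_num),
      padicValNat.prime_pow, padicValNat.eq_zero_of_not_dvd (by norm_num)]
  · subst h3
    rw [show 12 = 3 * 4 by norm_num, padicValNat.mul (by norm_num) (by norm_num),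
      padicValNat_self, padicValNat.eq_zero_of_not_dvd (by norm_num)]
  · refine padicValNat.eq_zero_of_not_dvd fun h => ?_
    rw [show 12 = 2 ^ 2 * 3 by norm_num] at h
    rcases (Nat.Prime.dvd_mul hp.out).mp h with h | h
    · exact h2 ((Nat.prime_dvd_prime_iff_eq hp.out Nat.prime_two).mp (hp.out.dvd_of_dvd_pow h))
    · exact h3 ((Nat.prime_dvd_prime_iff_eq hp.out Nat.prime_three).mp h)

lemma norm_twelve :
    ‖(12 : ℚ_[p])‖ = (p : ℝ) ^ (-(if p = 2 then 2 else if p = 3 then 1 else 0 : ℤ)) := by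
  rw [Padic.norm_eq_zpow_neg_valuation (by norm_num), Padic.valuation_ofNat, padicValNat_twelve]
  push_cast
  rfl

end Padic

theorem stmt_2_general (p : ℕ) [Fact p.Prime] (n : ℕ) :
    ‖((∑ k ∈ (Finset.Icc 1 n).filter (fun k => ¬ p ∣ k), (1 : ℚ) / k : ℚ) : ℚ_[p])‖
      ≤ (p : ℝ) ^ (-(max 0 (2 * (padicValNat p n : ℤ) -
          (if p = 2 then 2 else if p = 3 then 1 else 0)))) := by
  simp only [Rat.cast_sum, Rat.cast_div, Rat.cast_one, Rat.cast_natCast]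
  change ‖∑ k ∈ primeToIcc p n, 1 / (k : ℚ_[p])‖ ≤ _
  set ε : ℤ := if p = 2 then 2 else if p = 3 then 1 else 0 with hε
  have hε0 : 0 ≤ ε := by rw [hε]; split_ifs <;> norm_num
  rcases max_cases 0 (2 * (padicValNat p n : ℤ) - ε) with ⟨hmax, -⟩ | ⟨hmax, hpos⟩
  · rw [hmax, neg_zero, zpow_zero]
    exact norm_sum_primeToIcc_one_div_le_one n
  · have hv : padicValNat p n ≠ 0 := by omega
    have hp_pos : (0 : ℝ) < p := by exact_mod_cast (Fact.out : p.Prime).pos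
    have h := norm_twelve_mul_sum_primeToIcc_one_div_le hv pow_padicValNat_dvd
    rw [norm_mul, norm_twelve, ← hε, ← le_div_iff₀' (zpow_pos hp_pos _),
      ← zpow_sub₀ hp_pos.ne'] at h
    rw [hmax]
    refine h.trans_eq (congrArg _ ?_)
    ring

theorem stmt_2 (p : ℕ) [Fact p.Prime] (n : ℕ) (hn : 0 < n) :
    ‖((∑ k ∈ (Finset.Icc 1 n).filter (fun k => ¬ p ∣ k), (1 : ℚ) / k : ℚ) : ℚ_[p])‖
      ≤ (p : ℝ) ^ (-(max 0 (2 * (padicValNat p n : ℤ) -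
          (if p = 2 then 2 else if p = 3 then 1 else 0)))) :=
  stmt_2_general p n
end

section
/- For n = 2^r with r ≥ 3, the sum ∑_{1 ≤ k ≤ 2^r, k odd} 1/k² is divisible by 2^{r−1} in ℤ_2. -/
/-!
Write `S r` for the sum over odd `k ≤ 2 ^ r`, and `a = 2 ^ (r + 1) - k`. Pairing `k` with `a`
gives `S (r + 1) = 2 * S r + ∑ (1 / a ^ 2 - 1 / k ^ 2)`, where
`1 / a ^ 2 - 1 / k ^ 2 = (k - a) (k + a) / (a k) ^ 2` with `a k` a 2-adic unit and
`k + a = 2 ^ (r + 1)`. As `‖2‖ = 1 / 2`, the ultrametric inequality gives `‖S r‖ ≤ 2 ^ (1 - r)`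
by induction.
-/

open Finset IsUltrametricDist

lemma Padic.norm_natCast_of_odd {k : ℕ} (hk : Odd k) : ‖(k : ℚ_[2])‖ = 1 :=
  Padic.norm_natCast_eq_one_iff.mpr (Nat.coprime_two_left.mpr hk)

lemma norm_one_div_sq_sub_one_div_sq {K : Type*} [NormedField K] {a b : K} (ha : ‖a‖ = 1)
    (hb : ‖b‖ = 1) : ‖1 / a ^ 2 - 1 / b ^ 2‖ = ‖b - a‖ * ‖b + a‖ := by
  have ha0 : a ≠ 0 := norm_ne_zero_iff.mp (by simp [ha])
  have hb0 : b ≠ 0 := norm_ne_zero_iff.mp (by simp [hb])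
  have : 1 / a ^ 2 - 1 / b ^ 2 = (b - a) * (b + a) / (a ^ 2 * b ^ 2) := by
    field_simp
    ring
  rw [this, norm_div, norm_mul, norm_mul, norm_pow, norm_pow, ha, hb]
  ring

lemma Padic.norm_one_div_sq_sub_one_div_sq_le {p : ℕ} [Fact p.Prime] {a b : ℕ}
    (ha : ‖(a : ℚ_[p])‖ = 1) (hb : ‖(b : ℚ_[p])‖ = 1) :
    ‖1 / (a : ℚ_[p]) ^ 2 - 1 / (b : ℚ_[p]) ^ 2‖ ≤ ‖((a + b : ℕ) : ℚ_[p])‖ := by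
  rw [norm_one_div_sq_sub_one_div_sq ha hb, Nat.cast_add, add_comm (a : ℚ_[p])]
  have : ‖(b : ℚ_[p]) - a‖ ≤ 1 := by simpa using Padic.norm_int_le_one (p := p) (b - a)
  exact mul_le_of_le_one_left (norm_nonneg _) this

lemma sum_filter_odd_Icc_two_mul {M : Type*} [AddCommMonoid M] (f : ℕ → M) {N : ℕ}
    (hN : Even N) :
    ∑ k ∈ (Icc 1 (2 * N)).filter Odd, f k
      = ∑ k ∈ (Icc 1 N).filter Odd, (f k + f (2 * N - k)) := by
  have hinj : Set.InjOn (2 * N - ·) ((Icc 1 N).filter Odd) := by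
    intro x hx y hy h
    simp only [coe_filter, mem_Icc, Set.mem_ofPred_eq] at hx hy h
    omega
  have hdisj : Disjoint ((Icc 1 N).filter Odd) (((Icc 1 N).filter Odd).image (2 * N - ·)) := by
    simp only [disjoint_left, mem_image, mem_filter, mem_Icc, Nat.odd_iff]
    rintro a ⟨ha, ha'⟩ ⟨b, ⟨hb, hb'⟩, rfl⟩
    obtain ⟨m, rfl⟩ := hN
    omega
  rw [sum_add_distrib, ← sum_image hinj, ← sum_union hdisj]
  congr 1
  ext k
  simp only [mem_filter, mem_Icc, mem_union, mem_image, Nat.odd_iff]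
  obtain ⟨m, rfl⟩ := hN
  constructor
  · rintro ⟨⟨h1, h2⟩, h3⟩
    by_cases h : k ≤ m + m
    · exact Or.inl ⟨⟨h1, h⟩, h3⟩
    · exact Or.inr ⟨2 * (m + m) - k, ⟨⟨by omega, by omega⟩, by omega⟩, by omega⟩
  · rintro (⟨⟨h1, h2⟩, h3⟩ | ⟨k, ⟨⟨h1, h2⟩, h3⟩, rfl⟩) <;> omega

theorem norm_sum_filter_odd_Icc_one_div_sq_le (r : ℕ) :
    ‖∑ k ∈ (Icc 1 (2 ^ (r + 1)) : Finset ℕ).filter Odd, 1 / (k : ℚ_[2]) ^ 2‖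
      ≤ 2 ^ (-r : ℤ) := by
  induction r with
  | zero => simp [show (Icc 1 2 : Finset ℕ).filter Odd = {1} by decide]
  | succ r ih =>
    set N := 2 ^ (r + 1)
    set A := (Icc 1 N).filter Odd
    have hsplit : ∑ k ∈ A, (1 / (k : ℚ_[2]) ^ 2 + 1 / ((2 * N - k : ℕ) : ℚ_[2]) ^ 2)
        = 2 * ∑ k ∈ A, 1 / (k : ℚ_[2]) ^ 2
          + ∑ k ∈ A, (1 / ((2 * N - k : ℕ) : ℚ_[2]) ^ 2 - 1 / (k : ℚ_[2]) ^ 2) := by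
      rw [mul_sum, ← sum_add_distrib]
      exact sum_congr rfl fun _ _ => by ring
    have hN : Even N := Nat.even_pow.mpr ⟨even_two, r.add_one_ne_zero⟩
    rw [pow_succ', sum_filter_odd_Icc_two_mul _ hN, hsplit]
    refine (norm_add_le_max _ _).trans (max_le ?_ ?_)
    · calc ‖2 * ∑ k ∈ A, 1 / (k : ℚ_[2]) ^ 2‖ ≤ 2⁻¹ * 2 ^ (-r : ℤ) := by
            have h2 : ‖(2 : ℚ_[2])‖ = 2⁻¹ := by simpa using Padic.norm_p (p := 2)
            rw [norm_mul, h2]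
            gcongr
        _ = 2 ^ (-(r + 1 : ℕ) : ℤ) := by
            rw [← zpow_neg_one, ← zpow_add₀ two_ne_zero]
            push_cast
            ring_nf
    · refine norm_sum_le_of_forall_le_of_nonneg (by positivity) fun k hk => ?_
      obtain ⟨⟨-, hkN⟩, hk⟩ := mem_filter.mp hk |>.imp_left mem_Icc.mp
      have hk' : Odd (2 * N - k) := Nat.Even.sub_odd (by omega) (even_two_mul N) hk
      calc _ ≤ ‖((2 * N - k + k : ℕ) : ℚ_[2])‖ :=
            Padic.norm_one_div_sq_sub_one_div_sq_le (Padic.norm_natCast_of_odd hk')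
              (Padic.norm_natCast_of_odd hk)
        _ = ‖((2 : ℕ) : ℚ_[2]) ^ (r + 2)‖ := by
            rw [Nat.sub_add_cancel (by omega)]
            push_cast [N]
            ring_nf
        _ = 2 ^ (-(r + 2 : ℕ) : ℤ) := by simpa using Padic.norm_p_pow (p := 2) (r + 2)
        _ ≤ 2 ^ (-(r + 1 : ℕ) : ℤ) := zpow_le_zpow_right₀ (by norm_num) (by omega)

theorem stmt_4_general (r : ℕ) :
    ‖((∑ k ∈ ((Finset.Icc 1 (2 ^ r) : Finset ℕ)).filter (fun k => Odd k), (1 : ℚ) / ((k : ℚ) ^ 2) : ℚ) : ℚ_[2])‖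
      ≤ (2 : ℝ) ^ (-((r : ℤ) - 1)) := by
  push_cast
  rcases r with _ | r
  · norm_num [filter_singleton]
  · simpa using norm_sum_filter_odd_Icc_one_div_sq_le r

theorem stmt_4 (r : ℕ) (hr : 3 ≤ r) :
    ‖((∑ k ∈ ((Finset.Icc 1 (2 ^ r) : Finset ℕ)).filter (fun k => Odd k), (1 : ℚ) / ((k : ℚ) ^ 2) : ℚ) : ℚ_[2])‖
      ≤ (2 : ℝ) ^ (-((r : ℤ) - 1)) :=
  stmt_4_general r
end

section
/- Let p be a prime, a ≥ b ≥ 0 integers, and r ∈ ℕ. Then the ratio C(a p^r, b p^r) / C(a p^{r−1}, b p^{r−1}) is congruent to 1 + p^r (a−b) F₁ + p^{2r} (a−b)² F₂ modulo p^{3r} in ℤ_p, where F₁ = ∑_{1 ≤ k ≤ b p^r, p ∤ k} 1/k and F₂ = ∑_{1 ≤ i < j ≤ b p^r, p ∤ ij} 1/(ij). -/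
/-!
Writing `C(c + N, N) = ∏_{k ≤ N} (c + k) / k` with `c = (a - b) pʳ` and `N = b pʳ`, the factors with
`p ∣ k` make up `C(a pʳ⁻¹, b pʳ⁻¹)`, so the ratio is `∏ (1 + x_k)` over the `k ≤ b pʳ` prime to `p`,
where `x_k = pʳ (a - b) / k` has `p`-adic norm at most `p⁻ʳ`. The terms of degree at least three in
the expansion of this product have norm at most `p⁻³ʳ` by the ultrametric inequality.
-/

open Finset

section SecondOrder

variable {ι : Type*} [LinearOrder ι]

lemma sum_sum_filter_lt_insert_of_forall_lt {R : Type*} [NonUnitalNonAssocSemiring R]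
    {s : Finset ι} {a : ι} (hlt : ∀ k ∈ s, k < a) (x : ι → R) :
    ∑ j ∈ insert a s, ∑ i ∈ (insert a s).filter (· < j), x i * x j =
      (∑ i ∈ s, x i) * x a + ∑ j ∈ s, ∑ i ∈ s.filter (· < j), x i * x j := by
  have has : a ∉ s := fun h => lt_irrefl a (hlt a h)
  rw [sum_insert has, filter_insert, if_neg (lt_irrefl a), filter_true_of_mem hlt, sum_mul]
  congr 1
  refine sum_congr rfl fun j hj => ?_
  rw [filter_insert, if_neg (hlt j hj).not_gt]

lemma norm_sum_sum_filter_lt_mul_le {R : Type*} [SeminormedRing R] [IsUltrametricDist R]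
    (s : Finset ι) (x : ι → R) {ε : ℝ} (hε : 0 ≤ ε) (hx : ∀ k ∈ s, ‖x k‖ ≤ ε) :
    ‖∑ j ∈ s, ∑ i ∈ s.filter (· < j), x i * x j‖ ≤ ε ^ 2 := by
  refine IsUltrametricDist.norm_sum_le_of_forall_le_of_nonneg (by positivity) fun j hj => ?_
  refine IsUltrametricDist.norm_sum_le_of_forall_le_of_nonneg (by positivity) fun i hi => ?_
  calc ‖x i * x j‖ ≤ ‖x i‖ * ‖x j‖ := norm_mul_le _ _
    _ ≤ ε * ε := mul_le_mul (hx i (mem_filter.1 hi).1) (hx j hj) (norm_nonneg _) hε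
    _ = ε ^ 2 := (sq ε).symm

theorem norm_prod_one_add_sub_le_pow_three {R : Type*} [SeminormedCommRing R] [NormOneClass R]
    [IsUltrametricDist R] (s : Finset ι) (x : ι → R) {ε : ℝ} (hε0 : 0 ≤ ε) (hε1 : ε ≤ 1)
    (hx : ∀ k ∈ s, ‖x k‖ ≤ ε) :
    ‖∏ k ∈ s, (1 + x k) -
        (1 + ∑ k ∈ s, x k + ∑ j ∈ s, ∑ i ∈ s.filter (· < j), x i * x j)‖ ≤ ε ^ 3 := by
  classical
  induction s using Finset.induction_on_max with
  | empty => simpa using pow_nonneg hε0 3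
  | insert a s hlt ih =>
    have has : a ∉ s := fun h => lt_irrefl a (hlt a h)
    have hxa : ‖x a‖ ≤ ε := hx a (mem_insert_self a s)
    have hxs : ∀ k ∈ s, ‖x k‖ ≤ ε := fun k hk => hx k (mem_insert_of_mem hk)
    have h1a : ‖1 + x a‖ ≤ 1 :=
      (IsUltrametricDist.norm_add_le_max _ _).trans (max_le norm_one.le (hxa.trans hε1))
    set P := ∏ k ∈ s, (1 + x k)
    set E₁ := ∑ k ∈ s, x k
    set E₂ := ∑ j ∈ s, ∑ i ∈ s.filter (· < j), x i * x j
    rw [prod_insert has, sum_insert has, sum_sum_filter_lt_insert_of_forall_lt hlt]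
    calc ‖(1 + x a) * P - (1 + (x a + E₁) + (E₁ * x a + E₂))‖
        = ‖(1 + x a) * (P - (1 + E₁ + E₂)) + x a * E₂‖ := by congr 1; ring
      _ ≤ max ‖(1 + x a) * (P - (1 + E₁ + E₂))‖ ‖x a * E₂‖ :=
        IsUltrametricDist.norm_add_le_max _ _
      _ ≤ ε ^ 3 := by
        refine max_le ?_ ?_
        · calc ‖(1 + x a) * (P - (1 + E₁ + E₂))‖ ≤ ‖1 + x a‖ * ‖P - (1 + E₁ + E₂)‖ :=
                norm_mul_le _ _
            _ ≤ 1 * ε ^ 3 := mul_le_mul h1a (ih hxs) (norm_nonneg _) zero_le_one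
            _ = ε ^ 3 := one_mul _
        · calc ‖x a * E₂‖ ≤ ‖x a‖ * ‖E₂‖ := norm_mul_le _ _
            _ ≤ ε * ε ^ 2 := mul_le_mul hxa (norm_sum_sum_filter_lt_mul_le s x hε0 hxs)
                (norm_nonneg _) hε0
            _ = ε ^ 3 := by ring

end SecondOrder

section Binomial

variable {K : Type*} [Field K] [CharZero K]

theorem Nat.cast_add_choose_eq_prod (c N : ℕ) :
    ((c + N).choose N : K) = ∏ k ∈ Icc 1 N, ((c + k : K) / k) := by
  induction N with
  | zero => simp
  | succ n ih =>
    rw [prod_Icc_succ_top (Nat.le_add_left 1 n), ← ih]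
    have h : ((c + n + 1).choose (n + 1) : K) * ((n + 1 : ℕ) : K) =
        ((c + n + 1 : ℕ) : K) * ((c + n).choose n : K) := by
      exact_mod_cast (Nat.add_one_mul_choose_eq (c + n) n).symm
    have hn : (n : K) + 1 ≠ 0 := by exact_mod_cast n.succ_ne_zero
    push_cast at h ⊢
    rw [← add_assoc]
    field_simp
    linear_combination h

theorem Nat.cast_choose_mul_add_mul {p : ℕ} (hp : 0 < p) (c N : ℕ) :
    ((p * c + p * N).choose (p * N) : K) =
      ((c + N).choose N : K) *
        ∏ k ∈ (Icc 1 (p * N)).filter (fun k => ¬ p ∣ k), (1 + (p * c : K) / k) := by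
  rw [Nat.cast_add_choose_eq_prod, Nat.cast_add_choose_eq_prod,
    ← prod_filter_mul_prod_filter_not (Icc 1 (p * N)) (p ∣ ·)]
  congr 1
  · have himage : (Icc 1 (p * N)).filter (p ∣ ·) = (Icc 1 N).image (p * ·) := by
      ext k
      simp only [mem_filter, mem_Icc, mem_image]
      constructor
      · rintro ⟨⟨h1, h2⟩, m, rfl⟩
        exact ⟨m, ⟨Nat.pos_of_mul_pos_left h1, Nat.le_of_mul_le_mul_left h2 hp⟩, rfl⟩
      · rintro ⟨m, ⟨h1, h2⟩, rfl⟩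
        exact ⟨⟨Nat.mul_pos hp h1, Nat.mul_le_mul_left p h2⟩, m, rfl⟩
    rw [himage, prod_image fun _ _ _ _ h => Nat.eq_of_mul_eq_mul_left hp h]
    refine prod_congr rfl fun m _ => ?_
    have hp' : (p : K) ≠ 0 := by exact_mod_cast hp.ne'
    push_cast
    rw [← mul_add, mul_div_mul_left _ _ hp']
  · refine prod_congr rfl fun k hk => ?_
    have hk : (k : K) ≠ 0 := by
      exact_mod_cast (Nat.one_le_iff_ne_zero.1 (mem_Icc.1 (mem_filter.1 hk).1).1)
    push_cast
    rw [add_div, div_self hk, add_comm]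

theorem Nat.cast_choose_mul_pow_div_eq_prod {p : ℕ} (hp : 0 < p) {a b : ℕ} (hba : b ≤ a)
    {r : ℕ} (hr : 0 < r) :
    ((a * p ^ r).choose (b * p ^ r) : ℚ) / ((a * p ^ (r - 1)).choose (b * p ^ (r - 1)) : ℚ) =
      ∏ k ∈ (Icc 1 (b * p ^ r)).filter (fun k => ¬ p ∣ k),
        (1 + (p : ℚ) ^ r * ((a : ℚ) - (b : ℚ)) / k) := by
  obtain ⟨m, rfl⟩ : ∃ m, r = m + 1 := ⟨r - 1, by omega⟩
  have ha : a * p ^ (m + 1) = p * ((a - b) * p ^ m) + p * (b * p ^ m) := by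
    rw [← mul_add, ← add_mul, Nat.sub_add_cancel hba]; ring
  have ha' : a * p ^ m = (a - b) * p ^ m + b * p ^ m := by
    rw [← add_mul, Nat.sub_add_cancel hba]
  have hb : b * p ^ (m + 1) = p * (b * p ^ m) := by ring
  have hC : ((a * p ^ m).choose (b * p ^ m) : ℚ) ≠ 0 := by
    exact_mod_cast (Nat.choose_pos (Nat.mul_le_mul_right _ hba)).ne'
  rw [Nat.add_sub_cancel, ha, hb, Nat.cast_choose_mul_add_mul hp, ← ha',
    mul_div_cancel_left₀ _ hC]
  refine prod_congr rfl fun k _ => ?_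
  push_cast [Nat.cast_sub hba]
  ring

end Binomial

theorem Finset.filter_Icc_one_sub_one_eq_filter_lt (P : ℕ → Prop) [DecidablePred P] {j N : ℕ}
    (hj : j ≤ N) : (Icc 1 (j - 1)).filter P = ((Icc 1 N).filter P).filter (· < j) := by
  ext i
  simp only [mem_filter, mem_Icc]
  grind

theorem Padic.norm_p_pow_mul_intCast_div_natCast_le {p : ℕ} [Fact p.Prime] (r : ℕ) (z : ℤ)
    {k : ℕ} (hk : ¬ p ∣ k) : ‖(p : ℚ_[p]) ^ r * z / k‖ ≤ (p : ℝ) ^ (-r : ℤ) := by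
  rw [norm_div, norm_mul, Padic.norm_p_pow,
    Padic.norm_natCast_eq_one_iff.2 ((Nat.Prime.coprime_iff_not_dvd Fact.out).2 hk), div_one]
  exact mul_le_of_le_one_right (by positivity) (Padic.norm_int_le_one z)

theorem stmt_8 (p : ℕ) [Fact p.Prime] (a b : ℕ) (hba : b ≤ a) (r : ℕ) (hr : 0 < r) :
    ‖((((Nat.choose (a * p ^ r) (b * p ^ r) : ℚ) /
          (Nat.choose (a * p ^ (r - 1)) (b * p ^ (r - 1)) : ℚ))
        - (1 + (p : ℚ) ^ r * ((a : ℚ) - (b : ℚ)) *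
            (∑ k ∈ (Finset.Icc 1 (b * p ^ r)).filter (fun k => ¬ p ∣ k), (1 : ℚ) / k)
          + (p : ℚ) ^ (2 * r) * ((a : ℚ) - (b : ℚ)) ^ 2 *
            (∑ j ∈ (Finset.Icc 1 (b * p ^ r)).filter (fun j => ¬ p ∣ j),
              ∑ i ∈ (Finset.Icc 1 (j - 1)).filter (fun i => ¬ p ∣ i),
                (1 : ℚ) / ((i : ℚ) * (j : ℚ)))) : ℚ) : ℚ_[p])‖
      ≤ (p : ℝ) ^ (-(3 * r : ℤ)) := by
  have hp : p.Prime := Fact.out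
  set S := (Icc 1 (b * p ^ r)).filter (fun k => ¬ p ∣ k)
  set x : ℕ → ℚ := fun k => (p : ℚ) ^ r * ((a : ℚ) - (b : ℚ)) / k with hx
  have hF₁ : (p : ℚ) ^ r * ((a : ℚ) - (b : ℚ)) * ∑ k ∈ S, (1 : ℚ) / k = ∑ k ∈ S, x k := by
    rw [mul_sum]
    exact sum_congr rfl fun k _ => mul_one_div _ _
  have hF₂ : (p : ℚ) ^ (2 * r) * ((a : ℚ) - (b : ℚ)) ^ 2 *
      (∑ j ∈ S, ∑ i ∈ (Icc 1 (j - 1)).filter (fun i => ¬ p ∣ i), (1 : ℚ) / ((i : ℚ) * (j : ℚ))) =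
        ∑ j ∈ S, ∑ i ∈ S.filter (· < j), x i * x j := by
    rw [mul_sum]
    refine sum_congr rfl fun j hj => ?_
    rw [filter_Icc_one_sub_one_eq_filter_lt _ (mem_Icc.1 (mem_filter.1 hj).1).2, mul_sum]
    exact sum_congr rfl fun i _ => by rw [hx]; ring
  have hxk : ∀ k ∈ S, ‖((x k : ℚ) : ℚ_[p])‖ ≤ (p : ℝ) ^ (-(r : ℤ)) := fun k hk => by
    simpa [hx] using Padic.norm_p_pow_mul_intCast_div_natCast_le r ((a : ℤ) - b)
      (mem_filter.1 hk).2
  have hε₁ : (p : ℝ) ^ (-(r : ℤ)) ≤ 1 :=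
    zpow_le_one_of_nonpos₀ (by exact_mod_cast hp.one_le) (by omega)
  have hε₃ : ((p : ℝ) ^ (-(r : ℤ))) ^ 3 = (p : ℝ) ^ (-(3 * r : ℤ)) := by
    rw [← zpow_natCast, ← zpow_mul]
    ring_nf
  have hratio : ((a * p ^ r).choose (b * p ^ r) : ℚ) /
      ((a * p ^ (r - 1)).choose (b * p ^ (r - 1)) : ℚ) = ∏ k ∈ S, (1 + x k) :=
    Nat.cast_choose_mul_pow_div_eq_prod hp.pos hba hr
  rw [hratio, hF₁, hF₂, ← hε₃]
  exact_mod_cast norm_prod_one_add_sub_le_pow_three S (fun k => ((x k : ℚ) : ℚ_[p]))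
    (by positivity) hε₁ hxk
end

section
/- Let p be a prime, y ∈ ℤ_p^ℕ, and 1 ≤ k ≤ m integers with ord_p(k) > ord_p(m). Then (k!/m!)·B_{m,k}(!y) ≡ 0 mod p^{ord_p(k) − ord_p(m)} in ℤ_p, where B_{m,k} is the partial Bell polynomial and !y = (n!·y_n)_n. -/
/-- The index set `π(m,k)` of multi-indices `α ∈ ℕ₀^{m-k+1}` with `∑ α_i = k` and
`∑ i·α_i = m` (indices shifted so that `α i` corresponds to `α_{i+1}`). -/
def bellIndex (m k : ℕ) : Finset (Fin (m - k + 1) → ℕ) :=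
  (Fintype.piFinset fun _ => Finset.range (k + 1)).filter
    fun α => (∑ i, α i) = k ∧ (∑ i, (i.1 + 1) * α i) = m

/-- The `(m,k)`-th partial Bell polynomial evaluated at `x₁, x₂, …`. -/
noncomputable def partialBell {K : Type*} [Field K] (m k : ℕ) (x : ℕ → K) : K :=
  (m.factorial : K) * ∑ α ∈ bellIndex m k,
    ∏ i, (1 / ((α i).factorial : K)) * (x (i.1 + 1) / (((i.1 + 1).factorial : K))) ^ (α i)

/-!
After clearing factorials, `(k!/m!)·B_{m,k}(!y)` is `∑_{α ∈ π(m,k)} multinomial(k; α) ∏ y_i^{α_i}`,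
so by the ultrametric inequality it suffices that `p^{ord_p k - ord_p m}` divides every
multinomial coefficient. Since `m = ∑ i α_i`, some summand `j α_j` has `ord_p (j α_j) ≤ ord_p m`,
hence `ord_p α_j ≤ ord_p m`; and `k` divides `multinomial(k; α) · α_j`, because
`k ∣ C(k, α_j) · α_j` and `C(k, α_j)` divides the multinomial coefficient.
-/

open Finset Nat

namespace Nat

theorem dvd_choose_mul_self (k r : ℕ) : k ∣ k.choose r * r := by
  rcases r with _ | s
  · simp
  rcases k with _ | n
  · simp
  exact ⟨_, (add_one_mul_choose_eq n s).symm⟩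

theorem choose_dvd_multinomial {ι : Type*} [DecidableEq ι] {s : Finset ι} (α : ι → ℕ)
    {j : ι} (hj : j ∈ s) : (∑ i ∈ s, α i).choose (α j) ∣ multinomial s α := by
  rw [← insert_erase hj, multinomial_insert (notMem_erase j s), sum_insert (notMem_erase j s)]
  exact Dvd.intro _ rfl

theorem sum_dvd_multinomial_mul {ι : Type*} [DecidableEq ι] {s : Finset ι} (α : ι → ℕ)
    {j : ι} (hj : j ∈ s) : (∑ i ∈ s, α i) ∣ multinomial s α * α j :=
  (dvd_choose_mul_self _ _).trans (mul_dvd_mul_right (choose_dvd_multinomial α hj) _)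

end Nat

section padicValNat

variable {p : ℕ} [Fact p.Prime]

theorem padicValNat_le_of_dvd {a b : ℕ} (hb : b ≠ 0) (h : a ∣ b) :
    padicValNat p a ≤ padicValNat p b :=
  (padicValNat_dvd_iff_le hb).mp (pow_padicValNat_dvd.trans h)

theorem exists_mem_padicValNat_le_padicValNat_sum {ι : Type*} {s : Finset ι} {f : ι → ℕ}
    (h : ∑ i ∈ s, f i ≠ 0) :
    ∃ j ∈ s, f j ≠ 0 ∧ padicValNat p (f j) ≤ padicValNat p (∑ i ∈ s, f i) := by
  by_contra! hlt
  refine pow_succ_padicValNat_not_dvd (p := p) h (dvd_sum fun j hj => ?_)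
  rw [padicValNat_dvd_iff]
  by_cases hj0 : f j = 0
  · exact .inl hj0
  · exact .inr (hlt j hj hj0)

theorem padicValNat_sum_le_add_padicValNat_multinomial {ι : Type*} [DecidableEq ι]
    {s : Finset ι} (w α : ι → ℕ) (hw : ∀ i ∈ s, w i ≠ 0) :
    padicValNat p (∑ i ∈ s, α i)
      ≤ padicValNat p (∑ i ∈ s, w i * α i) + padicValNat p (multinomial s α) := by
  by_cases hm : ∑ i ∈ s, w i * α i = 0
  · have hα : ∑ i ∈ s, α i = 0 := sum_eq_zero fun i hi =>
      (Nat.mul_eq_zero.mp (sum_eq_zero_iff.mp hm i hi)).resolve_left (hw i hi)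
    simp [hα]
  obtain ⟨j, hj, hj0, hjv⟩ := exists_mem_padicValNat_le_padicValNat_sum (p := p) hm
  have hαj : α j ≠ 0 := right_ne_zero_of_mul hj0
  have hmult : multinomial s α ≠ 0 := (multinomial_pos s α).ne'
  have hvαj : padicValNat p (α j) ≤ padicValNat p (∑ i ∈ s, w i * α i) :=
    (padicValNat_le_of_dvd hj0 (dvd_mul_left _ _)).trans hjv
  have hk := padicValNat_le_of_dvd (p := p) (mul_ne_zero hmult hαj) (sum_dvd_multinomial_mul α hj)
  rw [padicValNat.mul hmult hαj] at hk
  omega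

end padicValNat

theorem factorial_div_factorial_mul_partialBell_eq_sum_multinomial {K : Type*} [Field K]
    [CharZero K] (m k : ℕ) (x : ℕ → K) :
    ((k ! : K) / m !) * partialBell m k (fun n => n ! * x n)
      = ∑ α ∈ bellIndex m k, (multinomial univ α : K) * ∏ i, x (i.1 + 1) ^ α i := by
  have hfact (n : ℕ) : (n ! : K) ≠ 0 := Nat.cast_ne_zero.mpr (factorial_ne_zero n)
  rw [partialBell, ← mul_assoc, div_mul_cancel₀ _ (hfact m), mul_sum]
  refine sum_congr rfl fun α hα => ?_
  have hk : ∑ i, α i = k := (mem_filter.mp hα).2.1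
  have hmult : (k ! : K) * ∏ i, 1 / ((α i)! : K) = multinomial univ α := by
    have hspec := multinomial_spec univ α
    rw [hk] at hspec
    rw [← hspec]
    push_cast
    rw [mul_comm, ← mul_assoc, ← prod_mul_distrib]
    simp [hfact]
  simp only [mul_div_cancel_left₀ _ (hfact _), prod_mul_distrib, ← mul_assoc, hmult]

theorem Padic.norm_natCast_mul_le_of_pow_dvd {p : ℕ} [Fact p.Prime] {n d : ℕ} (h : p ^ d ∣ n)
    (z : ℤ_[p]) : ‖(n : ℚ_[p]) * z‖ ≤ (p : ℝ) ^ (-d : ℤ) := by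
  rw [norm_mul, PadicInt.padic_norm_e_of_padicInt]
  refine (mul_le_of_le_one_right (norm_nonneg _) z.norm_le_one).trans ?_
  exact_mod_cast (Padic.norm_int_le_pow_iff_dvd (n : ℤ) d).mpr (by exact_mod_cast h)

theorem stmt_10_general (p : ℕ) [Fact p.Prime] (y : ℕ → ℤ_[p]) (k m : ℕ)
    (hval : padicValNat p m < padicValNat p k) :
    ‖((k.factorial : ℚ_[p]) / (m.factorial : ℚ_[p])) *
        partialBell m k (fun n => (n.factorial : ℚ_[p]) * (y n : ℚ_[p]))‖
      ≤ (p : ℝ) ^ (-((padicValNat p k : ℤ) - (padicValNat p m : ℤ))) := by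
  rw [factorial_div_factorial_mul_partialBell_eq_sum_multinomial, ← Nat.cast_sub hval.le]
  refine IsUltrametricDist.norm_sum_le_of_forall_le_of_nonneg (by positivity) fun α hα => ?_
  obtain ⟨-, hk, hm⟩ := mem_filter.mp hα
  have hv := padicValNat_sum_le_add_padicValNat_multinomial (p := p) (s := univ)
    (fun i : Fin (m - k + 1) => i.1 + 1) α (fun _ _ => succ_ne_zero _)
  rw [hk, hm] at hv
  have hdvd : p ^ (padicValNat p k - padicValNat p m) ∣ multinomial univ α :=
    (padicValNat_dvd_iff_le (multinomial_pos _ _).ne').mpr (by omega)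
  simpa using Padic.norm_natCast_mul_le_of_pow_dvd hdvd (∏ i, y (i.1 + 1) ^ α i)

theorem stmt_10 (p : ℕ) [Fact p.Prime] (y : ℕ → ℤ_[p]) (k m : ℕ) (h1 : 1 ≤ k) (h2 : k ≤ m)
    (hval : padicValNat p m < padicValNat p k) :
    ‖((k.factorial : ℚ_[p]) / (m.factorial : ℚ_[p])) *
        partialBell m k (fun n => (n.factorial : ℚ_[p]) * (y n : ℚ_[p]))‖
      ≤ (p : ℝ) ^ (-((padicValNat p k : ℤ) - (padicValNat p m : ℤ))) :=
  stmt_10_general p y k m hval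
end

section
/- Let p be a prime and Y ∈ 1 + z·ℤ_p⟦z⟧ a formal power series with Y(0) = 1 and all coefficients in ℤ_p. Then for all n, m ∈ ℕ, the m-th coefficient of Y(z)^n is divisible by p^{max(0, ord_p(n) − ord_p(m))} in ℤ_p. -/
open PowerSeries

/-! Differentiating `Y ^ n` gives `m · [Y ^ n]_m = n · [Y ^ (n - 1) Y']_(m - 1)`. The right-hand side
has norm at most `‖n‖ = p ^ (-ord_p n)` in `ℤ_[p]`, and `‖m‖ = p ^ (-ord_p m)`; dividing, and using
the trivial bound `‖·‖ ≤ 1`, gives the claim. -/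

theorem PowerSeries.coeff_pow_mul_natCast {R : Type*} [CommRing R] (Y : R⟦X⟧) (n : ℕ) {m : ℕ}
    (hm : 0 < m) :
    coeff m (Y ^ n) * m = n * coeff (m - 1) (Y ^ (n - 1) * d⁄dX R Y) := by
  have h := coeff_derivative (Y ^ n) (m - 1)
  rw [Nat.sub_add_cancel hm, Derivation.leibniz_pow, smul_eq_mul, map_nsmul, nsmul_eq_mul,
    Nat.cast_sub hm, Nat.cast_one, sub_add_cancel] at h
  rw [← h]

namespace PadicInt

variable {p : ℕ} [Fact p.Prime]

theorem norm_natCast_eq_zpow {k : ℕ} (hk : k ≠ 0) :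
    ‖(k : ℤ_[p])‖ = (p : ℝ) ^ (-(padicValNat p k : ℤ)) := by
  rw [norm_def, coe_natCast, Padic.norm_eq_zpow_neg_valuation (Nat.cast_ne_zero.mpr hk),
    Padic.valuation_natCast]

theorem norm_natCast_le_zpow (k : ℕ) : ‖(k : ℤ_[p])‖ ≤ (p : ℝ) ^ (-(padicValNat p k : ℤ)) := by
  rcases eq_or_ne k 0 with rfl | hk
  · simp
  · exact (norm_natCast_eq_zpow hk).le

theorem norm_le_zpow_of_mul_natCast_eq {a b : ℤ_[p]} {m n : ℕ} (hm : m ≠ 0) (h : a * m = n * b) :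
    ‖a‖ ≤ (p : ℝ) ^ (-(max 0 ((padicValNat p n : ℤ) - (padicValNat p m : ℤ)))) := by
  rcases le_total ((padicValNat p n : ℤ) - padicValNat p m) 0 with hle | hle
  · rw [max_eq_left hle, neg_zero, zpow_zero]
    exact norm_le_one a
  have hp : (0 : ℝ) < p := Nat.cast_pos.mpr (Fact.out : p.Prime).pos
  have hmul : ‖a‖ * (p : ℝ) ^ (-(padicValNat p m : ℤ)) ≤ (p : ℝ) ^ (-(padicValNat p n : ℤ)) :=
    calc ‖a‖ * (p : ℝ) ^ (-(padicValNat p m : ℤ)) = ‖(n : ℤ_[p])‖ * ‖b‖ := by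
          rw [← norm_natCast_eq_zpow hm, ← norm_mul, h, norm_mul]
      _ ≤ (p : ℝ) ^ (-(padicValNat p n : ℤ)) * 1 :=
          mul_le_mul (norm_natCast_le_zpow n) (norm_le_one b) (norm_nonneg b) (by positivity)
      _ = (p : ℝ) ^ (-(padicValNat p n : ℤ)) := mul_one _
  rw [max_eq_right hle, neg_sub', zpow_sub₀ hp.ne']
  exact (le_div_iff₀ (zpow_pos hp _)).mpr hmul

end PadicInt

theorem stmt_12_general (p : ℕ) [Fact p.Prime] (Y : PowerSeries ℤ_[p])
    (n m : ℕ) (hm : 0 < m) :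
    ‖PowerSeries.coeff m (Y ^ n)‖
      ≤ (p : ℝ) ^ (-(max 0 ((padicValNat p n : ℤ) - (padicValNat p m : ℤ)))) :=
  PadicInt.norm_le_zpow_of_mul_natCast_eq hm.ne' (coeff_pow_mul_natCast Y n hm)

theorem stmt_12 (p : ℕ) [Fact p.Prime] (Y : PowerSeries ℤ_[p])
    (hY : PowerSeries.constantCoeff Y = 1) (n m : ℕ) (hn : 0 < n) (hm : 0 < m) :
    ‖PowerSeries.coeff m (Y ^ n)‖
      ≤ (p : ℝ) ^ (-(max 0 ((padicValNat p n : ℤ) - (padicValNat p m : ℤ)))) :=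
  stmt_12_general p Y n m hm
end

section
/- Let F, G, H be formal power series with F, G ∈ z·ℚ⟦z⟧ mutually compositionally inverse (F(G(z)) = G(F(z)) = z, with F, G having nonzero linear term) and H ∈ z·ℚ⟦z⟧. Then for all n ≥ 1, the n-th coefficient of H(G(z)) equals (1/n) times the coefficient of z^0 in the Laurent series δH(z)/F(z)^n, where δ = z·d/dz. -/
/-!
Write `F = X * U` and `V = U⁻¹`. The functional `A ↦ [Xⁿ] (δA · Vⁿ)` only sees the
coefficients of `A` up to `n`, so on `A.subst F = ∑ aₘ Fᵐ` it is `∑ aₘ [Xⁿ] (δ(Fᵐ) · Vⁿ)`.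
With `E = V · δU` one has `δF = F (1 + E)` and `δV = -V E`, so for `n = m + j` the series
`δ(Fᵐ) · Vⁿ` is `m Xᵐ (Vʲ + Vʲ E)`, and `j Vʲ E = -δ(Vʲ)`; since `[Xʲ] δ(Vʲ) = j [Xʲ] Vʲ`
(the residue of a derivative vanishes), the term survives only for `m = n`. Hence
`n [Xⁿ] A = [Xⁿ] (δ(A ∘ F) · Vⁿ)`, and for `A = H ∘ G` we have `A ∘ F = H`.
-/

/-- Composition `H(G(z))` of formal power series (meaningful when `G` has zero
constant term). -/
noncomputable def pcomp {K : Type*} [Field K] (H G : PowerSeries K) : PowerSeries K :=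
  PowerSeries.mk fun n =>
    ∑ k ∈ Finset.range (n + 1), PowerSeries.coeff k H * PowerSeries.coeff n (G ^ k)

/-- The Euler operator `δ = z·d/dz`. -/
noncomputable def pdelta {K : Type*} [Field K] (H : PowerSeries K) : PowerSeries K :=
  PowerSeries.mk fun n => (n : K) * PowerSeries.coeff n H

open PowerSeries Finset

theorem PowerSeries.coeff_pow_eq_zero_of_lt {R : Type*} [Semiring R] {F : R⟦X⟧}
    (hF : constantCoeff F = 0) {i m : ℕ} (h : i < m) : coeff i (F ^ m) = 0 :=
  coeff_of_lt_order i ((Nat.cast_lt.mpr h).trans_le (le_order_pow_of_constantCoeff_eq_zero m hF))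

theorem PowerSeries.coeff_subst_eq_sum_range {R : Type*} [CommRing R] {F : R⟦X⟧}
    (hF : constantCoeff F = 0) (A : R⟦X⟧) {i n : ℕ} (hi : i ≤ n) :
    coeff i (A.subst F) = ∑ m ∈ range (n + 1), coeff m A * coeff i (F ^ m) := by
  rw [coeff_subst' (.of_constantCoeff_zero' hF)]
  refine finsum_eq_sum_of_support_subset _ fun m hm => ?_
  by_contra hmn
  simp only [coe_range, Set.mem_Iio, not_lt] at hmn
  exact hm (by simp [coeff_pow_eq_zero_of_lt hF (show i < m by omega)])

section Field

variable {K : Type*} [Field K]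

theorem pcomp_eq_subst {G : K⟦X⟧} (hG : constantCoeff G = 0) (H : K⟦X⟧) :
    pcomp H G = H.subst G := by
  ext n
  rw [coeff_subst_eq_sum_range hG H le_rfl, pcomp, coeff_mk]

protected theorem PowerSeries.inv_pow {U : K⟦X⟧} (hU : constantCoeff U ≠ 0) (n : ℕ) :
    (U ^ n)⁻¹ = U⁻¹ ^ n :=
  (inv_eq_iff_mul_eq_one (by simpa using pow_ne_zero n hU)).2
    (by rw [← mul_pow, PowerSeries.inv_mul_cancel U hU, one_pow])

theorem coeff_pdelta (H : K⟦X⟧) (n : ℕ) : coeff n (pdelta H) = n * coeff n H :=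
  coeff_mk _ _

theorem pdelta_eq_X_mul_derivative (H : K⟦X⟧) : pdelta H = X * d⁄dX K H := by
  ext (_ | n)
  · simp [coeff_pdelta]
  · rw [coeff_pdelta, coeff_succ_X_mul, coeff_derivative]
    push_cast
    ring

theorem constantCoeff_pdelta (H : K⟦X⟧) : constantCoeff (pdelta H) = 0 := by
  simp [pdelta_eq_X_mul_derivative]

theorem pdelta_X : pdelta (X : K⟦X⟧) = X := by
  simp [pdelta_eq_X_mul_derivative]

theorem pdelta_one : pdelta (1 : K⟦X⟧) = 0 := by
  simp [pdelta_eq_X_mul_derivative]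

theorem pdelta_mul (A B : K⟦X⟧) : pdelta (A * B) = pdelta A * B + A * pdelta B := by
  simp only [pdelta_eq_X_mul_derivative, Derivation.leibniz, smul_eq_mul]
  ring

theorem pdelta_pow_of_eq_mul {A E : K⟦X⟧} (h : pdelta A = A * E) (k : ℕ) :
    pdelta (A ^ k) = k * A ^ k * E := by
  induction k with
  | zero => simp [pdelta_one]
  | succ k ih =>
    rw [pow_succ, pdelta_mul, ih, h]
    push_cast
    ring

theorem coeff_pdelta_mul (B W : K⟦X⟧) (n : ℕ) :
    coeff n (pdelta B * W) = ∑ p ∈ antidiagonal n, p.1 * coeff p.1 B * coeff p.2 W := by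
  simp only [coeff_mul, coeff_pdelta]

variable [CharZero K]

theorem coeff_pow_mul_eq_neg_coeff_pow {V E : K⟦X⟧} (h : pdelta V = -(V * E)) {j : ℕ}
    (hj : j ≠ 0) : coeff j (V ^ j * E) = -coeff j (V ^ j) := by
  have h' := congrArg (coeff j) (pdelta_pow_of_eq_mul (E := -E) (by rw [h]; ring) j)
  rw [coeff_pdelta, ← map_natCast (C (R := K)), mul_assoc, coeff_C_mul, mul_neg, map_neg] at h'
  linear_combination mul_left_cancel₀ (Nat.cast_ne_zero.mpr hj) h'

theorem coeff_pdelta_pow_mul_pow {U V : K⟦X⟧} (hUV : U * V = 1) (m n : ℕ) :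
    coeff n (pdelta ((X * U) ^ m) * V ^ n) = if m = n then (n : K) else 0 := by
  set E := V * pdelta U
  have hF : pdelta (X * U) = X * U * (1 + E) := by
    rw [pdelta_mul, pdelta_X]
    linear_combination (-(X * pdelta U)) * hUV
  have hV : pdelta V = -(V * E) := by
    have h := congrArg pdelta hUV
    rw [pdelta_mul, pdelta_one] at h
    linear_combination V * h - pdelta V * hUV
  rw [pdelta_pow_of_eq_mul hF]
  rcases lt_or_ge n m with hnm | hmn
  · have hsplit : (m : K⟦X⟧) * (X * U) ^ m * (1 + E) * V ^ n
        = X ^ m * ((m : K⟦X⟧) * U ^ m * (1 + E) * V ^ n) := by ring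
    rw [hsplit, coeff_X_pow_mul', if_neg (by omega), if_neg (by omega)]
  obtain ⟨j, rfl⟩ := Nat.exists_eq_add_of_le hmn
  have hUVm : U ^ m * V ^ m = 1 := by rw [← mul_pow, hUV, one_pow]
  have hsplit : (m : K⟦X⟧) * (X * U) ^ m * (1 + E) * V ^ (m + j)
      = X ^ m * (C (m : K) * (V ^ j + V ^ j * E)) := by
    rw [map_natCast]
    linear_combination (m * X ^ m * V ^ j * (1 + E)) * hUVm
  rw [hsplit, add_comm m j, coeff_X_pow_mul, coeff_C_mul, map_add]
  rcases eq_or_ne j 0 with rfl | hj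
  · simp [E, constantCoeff_pdelta]
  · rw [coeff_pow_mul_eq_neg_coeff_pow hV hj, if_neg (by omega)]
    ring

theorem natCast_mul_coeff_eq_coeff_pdelta_subst_mul {U V : K⟦X⟧} (hUV : U * V = 1)
    (A : K⟦X⟧) (n : ℕ) :
    (n : K) * coeff n A = coeff n (pdelta (A.subst (X * U)) * V ^ n) := by
  have hF : constantCoeff (X * U) = 0 := by simp
  calc (n : K) * coeff n A
      = ∑ m ∈ range (n + 1), coeff m A * coeff n (pdelta ((X * U) ^ m) * V ^ n) := by
        simp only [coeff_pdelta_pow_mul_pow hUV, mul_ite, mul_zero, sum_ite_eq',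
          self_mem_range_succ, if_true]
        exact mul_comm _ _
    _ = ∑ p ∈ antidiagonal n, p.1 *
          (∑ m ∈ range (n + 1), coeff m A * coeff p.1 ((X * U) ^ m)) * coeff p.2 (V ^ n) := by
        simp only [coeff_pdelta_mul, mul_sum, sum_mul]
        rw [sum_comm]
        exact sum_congr rfl fun _ _ => sum_congr rfl fun _ _ => by ring
    _ = coeff n (pdelta (A.subst (X * U)) * V ^ n) := by
        rw [coeff_pdelta_mul]
        refine sum_congr rfl fun p hp => ?_
        rw [coeff_subst_eq_sum_range hF A (HasAntidiagonal.antidiagonal.fst_le hp)]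

end Field

theorem stmt_16_general (F G H : PowerSeries ℚ)
    (hG0 : PowerSeries.constantCoeff G = 0)
    (hF1 : PowerSeries.coeff 1 F ≠ 0)
    (hGF : pcomp G F = PowerSeries.X)
    (U : PowerSeries ℚ) (hU : F = PowerSeries.X * U) (n : ℕ) (hn : 0 < n) :
    PowerSeries.coeff n (pcomp H G) =
      (1 / (n : ℚ)) * PowerSeries.coeff n (pdelta H * (U ^ n)⁻¹) := by
  have hU0 : constantCoeff U ≠ 0 := by simpa [hU] using hF1
  have hF0 : constantCoeff F = 0 := by simp [hU]
  have hHGF : (pcomp H G).subst F = H := by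
    rw [pcomp_eq_subst hG0, subst_comp_subst_apply (.of_constantCoeff_zero' hG0)
      (.of_constantCoeff_zero' hF0), ← pcomp_eq_subst hF0, hGF, X_subst]
  have key := natCast_mul_coeff_eq_coeff_pdelta_subst_mul
    (PowerSeries.mul_inv_cancel U hU0) (pcomp H G) n
  rw [← hU, hHGF, ← PowerSeries.inv_pow hU0] at key
  rw [← key, one_div, inv_mul_cancel_left₀ (Nat.cast_ne_zero.mpr hn.ne')]

/-- Lagrange inversion: if `F` and `G` are mutually inverse under composition and
`F = z·U`, then `[H(G(z))]ₙ = (1/n)·[δH(z)/F(z)ⁿ]₀ = (1/n)·[δH(z)·U(z)⁻ⁿ]ₙ`. -/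
theorem stmt_16 (F G H : PowerSeries ℚ)
    (hF0 : PowerSeries.constantCoeff F = 0) (hG0 : PowerSeries.constantCoeff G = 0)
    (hF1 : PowerSeries.coeff 1 F ≠ 0) (hG1 : PowerSeries.coeff 1 G ≠ 0)
    (hH0 : PowerSeries.constantCoeff H = 0)
    (hFG : pcomp F G = PowerSeries.X) (hGF : pcomp G F = PowerSeries.X)
    (U : PowerSeries ℚ) (hU : F = PowerSeries.X * U) (n : ℕ) (hn : 0 < n) :
    PowerSeries.coeff n (pcomp H G) =
      (1 / (n : ℚ)) * PowerSeries.coeff n (pdelta H * (U ^ n)⁻¹) :=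
  stmt_16_general F G H hG0 hF1 hGF U hU n hn
end
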